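/- Define w : ℝ³ → ℝ³ by w(x,y,z) = (−e^x cos(y+z²), e^x sin(y+z²), 0) and let ξ : ℝ³ → ℝ³ be the rotation generator ξ(x,y,z) = (−y, x, 0). Then the Lie derivative w' = L_ξ w is given explicitly by w'(x,y,z) = (e^x[(1+x) sin(y+z²) + y cos(y+z²)], e^x[(1+x) cos(y+z²) − y sin(y+z²)], 0), and w' is again a solenoidal Beltrami field with the same proportionality coefficient: div w' = 0 and curl w' = 2z·w' on ℝ³. -/

import Mathlib

noncomputable section

abbrev R3 : Type := Fin 3 → ℝ

/-- Partial derivative of a scalar field in the `i`-th coordinate direction. -/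
def pd (i : Fin 3) (f : R3 → ℝ) (x : R3) : ℝ := fderiv ℝ f x (Pi.single i 1)

/-- Curl of a vector field on ℝ³. -/
def vcurl (v : R3 → R3) (x : R3) : R3 :=
  ![pd 1 (fun y => v y 2) x - pd 2 (fun y => v y 1) x,
    pd 2 (fun y => v y 0) x - pd 0 (fun y => v y 2) x,
    pd 0 (fun y => v y 1) x - pd 1 (fun y => v y 0) x]

/-- Divergence of a vector field on ℝ³. -/
def vdiv (v : R3 → R3) (x : R3) : ℝ :=
  pd 0 (fun y => v y 0) x + pd 1 (fun y => v y 1) x + pd 2 (fun y => v y 2) x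

/-- Componentwise directional derivative `(ξ·∇)v`. -/
def dirDeriv (ξ v : R3 → R3) (x : R3) : R3 :=
  fun j => ∑ i : Fin 3, ξ x i * pd i (fun y => v y j) x

/-- Lie derivative of a vector field: `L_ξ v = (ξ·∇)v − (v·∇)ξ`. -/
def lieD (ξ v : R3 → R3) : R3 → R3 :=
  fun x => dirDeriv ξ v x - dirDeriv v ξ x

/-- Gradient of a scalar field on ℝ³. -/
def grad3 (f : R3 → ℝ) (x : R3) : R3 := fun i => pd i f x

open ContinuousLinearMap Real

lemma hx' (p : R3) : HasFDerivAt (fun q : R3 => q 0) (proj 0 : R3 →L[ℝ] ℝ) p :=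
  (proj 0 : R3 →L[ℝ] ℝ).hasFDerivAt
lemma hy' (p : R3) : HasFDerivAt (fun q : R3 => q 1) (proj 1 : R3 →L[ℝ] ℝ) p :=
  (proj 1 : R3 →L[ℝ] ℝ).hasFDerivAt
lemma hz' (p : R3) : HasFDerivAt (fun q : R3 => q 2) (proj 2 : R3 →L[ℝ] ℝ) p :=
  (proj 2 : R3 →L[ℝ] ℝ).hasFDerivAt

lemma hu' (p : R3) : HasFDerivAt (fun q : R3 => q 1 + q 2 ^ 2)
    ((proj 1 : R3 →L[ℝ] ℝ) + (p 2 • (proj 2 : R3 →L[ℝ] ℝ) + p 2 • (proj 2 : R3 →L[ℝ] ℝ))) p := by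
  simpa [pow_two] using (hy' p).fun_add ((hz' p).fun_mul (hz' p))

lemma hE' (p : R3) : HasFDerivAt (fun q : R3 => Real.exp (q 0))
    (Real.exp (p 0) • (proj 0 : R3 →L[ℝ] ℝ)) p :=
  (Real.hasDerivAt_exp (p 0)).comp_hasFDerivAt (f := fun q : R3 => q 0) p (hx' p)

lemma hS' (p : R3) : HasFDerivAt (fun q : R3 => Real.sin (q 1 + q 2 ^ 2))
    (Real.cos (p 1 + p 2 ^ 2) •
      ((proj 1 : R3 →L[ℝ] ℝ) + (p 2 • (proj 2 : R3 →L[ℝ] ℝ) + p 2 • (proj 2 : R3 →L[ℝ] ℝ)))) p :=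
  (Real.hasDerivAt_sin _).comp_hasFDerivAt p (hu' p)

lemma hC' (p : R3) : HasFDerivAt (fun q : R3 => Real.cos (q 1 + q 2 ^ 2))
    ((-Real.sin (p 1 + p 2 ^ 2)) •
      ((proj 1 : R3 →L[ℝ] ℝ) + (p 2 • (proj 2 : R3 →L[ℝ] ℝ) + p 2 • (proj 2 : R3 →L[ℝ] ℝ)))) p :=
  (Real.hasDerivAt_cos _).comp_hasFDerivAt p (hu' p)

lemma pd_x (p : R3) (i : Fin 3) : pd i (fun q : R3 => q 0) p = ![1, 0, 0] i := by
  rw [pd, (hx' p).fderiv]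
  fin_cases i <;> simp [Pi.single_apply]

lemma pd_negy (p : R3) (i : Fin 3) : pd i (fun q : R3 => -(q 1)) p = ![0, -1, 0] i := by
  rw [pd, (hy' p).fun_neg.fderiv]
  fin_cases i <;> simp [Pi.single_apply]

lemma pd_zero (p : R3) (i : Fin 3) : pd i (fun _ : R3 => (0 : ℝ)) p = 0 := by
  rw [pd, fderiv_fun_const]
  simp

lemma pd_w0 (p : R3) (i : Fin 3) :
    pd i (fun q : R3 => -(Real.exp (q 0)) * Real.cos (q 1 + q 2 ^ 2)) p =
    ![-(Real.exp (p 0) * Real.cos (p 1 + p 2 ^ 2)),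
      Real.exp (p 0) * Real.sin (p 1 + p 2 ^ 2),
      Real.exp (p 0) * Real.sin (p 1 + p 2 ^ 2) * (2 * p 2)] i := by
  have h := ((hE' p).fun_neg.fun_mul (hC' p))
  rw [pd, h.fderiv]
  fin_cases i <;> simp [Pi.single_apply] <;> ring

lemma pd_w0' (p : R3) (i : Fin 3) :
    pd i (fun q : R3 => -(Real.exp (q 0) * Real.cos (q 1 + q 2 ^ 2))) p =
    ![-(Real.exp (p 0) * Real.cos (p 1 + p 2 ^ 2)),
      Real.exp (p 0) * Real.sin (p 1 + p 2 ^ 2),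
      Real.exp (p 0) * Real.sin (p 1 + p 2 ^ 2) * (2 * p 2)] i := by
  have := pd_w0 p i
  simpa [neg_mul] using this

lemma pd_w1 (p : R3) (i : Fin 3) :
    pd i (fun q : R3 => Real.exp (q 0) * Real.sin (q 1 + q 2 ^ 2)) p =
    ![Real.exp (p 0) * Real.sin (p 1 + p 2 ^ 2),
      Real.exp (p 0) * Real.cos (p 1 + p 2 ^ 2),
      Real.exp (p 0) * Real.cos (p 1 + p 2 ^ 2) * (2 * p 2)] i := by
  have h := ((hE' p).fun_mul (hS' p))
  rw [pd, h.fderiv]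
  fin_cases i <;> simp [Pi.single_apply] <;> ring

lemma pd_w'0 (p : R3) (i : Fin 3) :
    pd i (fun q : R3 => Real.exp (q 0) *
      ((1 + q 0) * Real.sin (q 1 + q 2 ^ 2) + q 1 * Real.cos (q 1 + q 2 ^ 2))) p =
    ![Real.exp (p 0) * ((2 + p 0) * Real.sin (p 1 + p 2 ^ 2) + p 1 * Real.cos (p 1 + p 2 ^ 2)),
      Real.exp (p 0) * ((2 + p 0) * Real.cos (p 1 + p 2 ^ 2) - p 1 * Real.sin (p 1 + p 2 ^ 2)),
      2 * p 2 * (Real.exp (p 0) *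
        ((1 + p 0) * Real.cos (p 1 + p 2 ^ 2) - p 1 * Real.sin (p 1 + p 2 ^ 2)))] i := by
  have h1 : HasFDerivAt (fun q : R3 => 1 + q 0) (proj 0 : R3 →L[ℝ] ℝ) p := by
    simpa using (hx' p).const_add 1
  have h := (hE' p).fun_mul ((h1.fun_mul (hS' p)).fun_add ((hy' p).fun_mul (hC' p)))
  rw [pd, h.fderiv]
  fin_cases i <;> simp [Pi.single_apply] <;> ring

lemma pd_w'1 (p : R3) (i : Fin 3) :
    pd i (fun q : R3 => Real.exp (q 0) *
      ((1 + q 0) * Real.cos (q 1 + q 2 ^ 2) - q 1 * Real.sin (q 1 + q 2 ^ 2))) p =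
    ![Real.exp (p 0) * ((2 + p 0) * Real.cos (p 1 + p 2 ^ 2) - p 1 * Real.sin (p 1 + p 2 ^ 2)),
      -(Real.exp (p 0) * ((2 + p 0) * Real.sin (p 1 + p 2 ^ 2) + p 1 * Real.cos (p 1 + p 2 ^ 2))),
      -(2 * p 2 * (Real.exp (p 0) *
        ((1 + p 0) * Real.sin (p 1 + p 2 ^ 2) + p 1 * Real.cos (p 1 + p 2 ^ 2))))] i := by
  have h1 : HasFDerivAt (fun q : R3 => 1 + q 0) (proj 0 : R3 →L[ℝ] ℝ) p := by
    simpa using (hx' p).const_add 1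
  have h := (hE' p).fun_mul ((h1.fun_mul (hC' p)).fun_sub ((hy' p).fun_mul (hS' p)))
  rw [pd, h.fderiv]
  fin_cases i <;> simp [Pi.single_apply] <;> ring

/-- the Lie derivative of the Beltrami field
`w = (−eˣ cos(y+z²), eˣ sin(y+z²), 0)` along the rotation generator
`ξ = (−y, x, 0)` is given explicitly and is again a solenoidal Beltrami
field with the same proportionality coefficient `2z`. -/
theorem lie_of_beltrami_z_squared_along_rotation :
    let w : R3 → R3 := fun p =>
      ![-(Real.exp (p 0)) * Real.cos (p 1 + (p 2) ^ 2),
        Real.exp (p 0) * Real.sin (p 1 + (p 2) ^ 2), 0]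
    let ξ : R3 → R3 := fun p => ![-(p 1), p 0, 0]
    let w' : R3 → R3 := lieD ξ w
    ∀ p : R3,
      w' p = ![Real.exp (p 0) * ((1 + p 0) * Real.sin (p 1 + (p 2) ^ 2)
                  + p 1 * Real.cos (p 1 + (p 2) ^ 2)),
               Real.exp (p 0) * ((1 + p 0) * Real.cos (p 1 + (p 2) ^ 2)
                  - p 1 * Real.sin (p 1 + (p 2) ^ 2)),
               0]
      ∧ vdiv w' p = 0
      ∧ vcurl w' p = (2 * p 2) • w' p := by
  intro w ξ w' p
  have hfun : w' = fun q : R3 =>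
      ![Real.exp (q 0) * ((1 + q 0) * Real.sin (q 1 + (q 2) ^ 2)
          + q 1 * Real.cos (q 1 + (q 2) ^ 2)),
        Real.exp (q 0) * ((1 + q 0) * Real.cos (q 1 + (q 2) ^ 2)
          - q 1 * Real.sin (q 1 + (q 2) ^ 2)),
        0] := by
    funext q j
    show (dirDeriv ξ w q - dirDeriv w ξ q) j = _
    fin_cases j <;>
      · simp [Pi.sub_apply, dirDeriv, Fin.sum_univ_three, w, ξ,
          pd_w0, pd_w0', pd_w1, pd_x, pd_negy, pd_zero]
        try ring
  refine ⟨by rw [hfun], ?_, ?_⟩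
  · rw [hfun, vdiv]
    simp only [Matrix.cons_val_zero, Matrix.cons_val_one, Matrix.head_cons,
      Matrix.cons_val_two, Matrix.tail_cons]
    simp only [pd_w'0, pd_w'1, pd_zero,
      Matrix.cons_val_zero, Matrix.cons_val_one, Matrix.head_cons,
      Matrix.cons_val_two, Matrix.tail_cons]
    ring
  · rw [hfun, vcurl]
    simp only [Matrix.cons_val_zero, Matrix.cons_val_one, Matrix.head_cons,
      Matrix.cons_val_two, Matrix.tail_cons]
    simp only [pd_w'0, pd_w'1, pd_zero,
      Matrix.cons_val_zero, Matrix.cons_val_one, Matrix.head_cons,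
      Matrix.cons_val_two, Matrix.tail_cons]
    funext j
    fin_cases j <;> · simp; try ring
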